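/- arXiv:1802.08641 — 4 statements merged into one kernel-verified Lean document; each statement's English description precedes it below -/
import Mathlib

section
/- Let M = (E, →, ◁, loc, λ) be an MSC over P and Σ, let π be a path expression, and let e, f ∈ E with e →* f. If last_π(e) ≠ ⊥ and last_π(f) ≠ ⊥, then last_π(e) ≤ last_π(f). -/
namespace Gossip

/-- Events extended with bottom and top elements. -/
inductive ExtEv (E : Type) : Type where
  | bot : ExtEv E
  | evt (e : E) : ExtEv E
  | top : ExtEv E

/-- A message sequence chart (MSC) over processes `P`, alphabet `A`,
with (finite, nonempty) set of events `E`. -/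
structure MSC (P A E : Type) : Type where
  fintypeE : Fintype E
  nonemptyE : Nonempty E
  loc : E → P
  lab : E → A
  /-- process successor relation `→` -/
  next : E → E → Prop
  /-- message relation `◁` -/
  msg : E → E → Prop
  next_loc : ∀ {e f : E}, next e f → loc e = loc f
  next_irrefl : ∀ e : E, ¬ next e e
  next_right_unique : ∀ {e f f' : E}, next e f → next e f' → f = f'
  next_left_unique : ∀ {e e' f : E}, next e f → next e' f → e = e'
  next_total : ∀ e f : E, loc e = loc f →
      Relation.ReflTransGen next e f ∨ Relation.ReflTransGen next f e
  msg_loc : ∀ {e f : E}, msg e f → loc e ≠ loc f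
  /-- every event belongs to at most one pair of `◁` -/
  msg_unique : ∀ {e f e' f' : E}, msg e f → msg e' f' →
      (e = e' ∨ e = f' ∨ f = e' ∨ f = f') → e = e' ∧ f = f'
  fifo : ∀ {e f e' f' : E}, msg e f → msg e' f' → loc e = loc e' → loc f = loc f' →
      (Relation.ReflTransGen next e e' ↔ Relation.ReflTransGen next f f')
  /-- `≤ = (→ ∪ ◁)*` is a partial order -/
  causal_antisymm : ∀ {e f : E},
      Relation.ReflTransGen (fun x y => next x y ∨ msg x y) e f →
      Relation.ReflTransGen (fun x y => next x y ∨ msg x y) f e → e = f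

namespace MSC

variable {P A E B : Type}

/-- the causal order `≤ = (→ ∪ ◁)*` -/
def le (M : MSC P A E) : E → E → Prop :=
  Relation.ReflTransGen (fun x y => M.next x y ∨ M.msg x y)

/-- the strict causal order `<` -/
def lt (M : MSC P A E) (e f : E) : Prop := M.le e f ∧ e ≠ f

/-- `→*` -/
def nextStar (M : MSC P A E) : E → E → Prop := Relation.ReflTransGen M.next

/-- the causal order extended to `E ∪ {⊥,⊤}` with `⊥ < e < ⊤` -/
def extLe (M : MSC P A E) : ExtEv E → ExtEv E → Prop
  | .bot, _ => True
  | _, .top => True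
  | .evt e, .evt f => M.le e f
  | _, _ => False

def extLt (M : MSC P A E) (x y : ExtEv E) : Prop := M.extLe x y ∧ x ≠ y

/-- replace the labelling of an MSC (e.g. to pair it with an extra labelling) -/
def relabel (M : MSC P A E) (μ : E → B) : MSC P B E where
  fintypeE := M.fintypeE
  nonemptyE := M.nonemptyE
  loc := M.loc
  lab := μ
  next := M.next
  msg := M.msg
  next_loc := M.next_loc
  next_irrefl := M.next_irrefl
  next_right_unique := M.next_right_unique
  next_left_unique := M.next_left_unique
  next_total := M.next_total
  msg_loc := M.msg_loc
  msg_unique := M.msg_unique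
  fifo := M.fifo
  causal_antisymm := M.causal_antisymm

end MSC

/-- letters of path expressions: `→`, `→*`, `p▷q`, `⟨a⟩` -/
inductive PathLetter (P A : Type) : Type where
  | next : PathLetter P A
  | nextStar : PathLetter P A
  | msg (p q : P) : PathLetter P A
  | lab (a : A) : PathLetter P A

/-- path expressions: finite words over `Γ` -/
abbrev PathExpr (P A : Type) := List (PathLetter P A)

variable {P A E : Type}

def letterSem (M : MSC P A E) : PathLetter P A → E → E → Prop
  | .next => M.next
  | .nextStar => M.nextStar
  | .msg p q => fun e f => M.loc e = p ∧ M.loc f = q ∧ M.msg e f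
  | .lab a => fun e f => e = f ∧ M.lab e = a

/-- `⟦π⟧` -/
def pathSem (M : MSC P A E) : PathExpr P A → E → E → Prop
  | [] => fun e f => e = f
  | l :: π => fun e g => ∃ f, letterSem M l e f ∧ pathSem M π f g

def letterComp : PathLetter P A → P → P → Prop
  | .msg p q => fun x y => x = p ∧ y = q
  | _ => fun x y => x = y

/-- `Comp(π)`; `π ∈ Π_{p,q}` iff `pcomp π p q` -/
def pcomp : PathExpr P A → P → P → Prop
  | [] => fun x y => x = y
  | l :: π => fun x z => ∃ y, letterComp l x y ∧ pcomp π y z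

/-- `IsLast M π e x` holds iff `x = last_π(e)` (with `x = ⊥` iff no `π`-path into `e`). -/
def IsLast (M : MSC P A E) (π : PathExpr P A) (e : E) : ExtEv E → Prop
  | .bot => ∀ f, ¬ pathSem M π f e
  | .evt g => pathSem M π g e ∧ ∀ f, pathSem M π f e → M.le f g
  | .top => False

/-- `IsFirst M π e x` holds iff `x = first_π(e)` (with `x = ⊤` iff no `π`-path out of `e`). -/
def IsFirst (M : MSC P A E) (π : PathExpr P A) (e : E) : ExtEv E → Prop
  | .top => ∀ f, ¬ pathSem M π e f
  | .evt g => pathSem M π e g ∧ ∀ f, pathSem M π e f → M.le g f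
  | .bot => False

/-- `IsFa M π π' e x` holds iff `x = f_{π,π'}(e) = first_{π'}(last_π(e))`, with
`first_{π'}(⊥) := ⊥`. -/
def IsFa (M : MSC P A E) (π π' : PathExpr P A) (e : E) (x : ExtEv E) : Prop :=
  (IsLast M π e ExtEv.bot ∧ x = ExtEv.bot) ∨
    ∃ g, IsLast M π e (ExtEv.evt g) ∧ IsFirst M π' g x

/-- `IsLastProc M p e x` holds iff `x = last_p(e)`, the maximal event of process `p`
strictly below `e` (`⊥` if none). -/
def IsLastProc (M : MSC P A E) (p : P) (e : E) : ExtEv E → Prop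
  | .bot => ∀ f, M.loc f = p → ¬ M.lt f e
  | .evt g => M.loc g = p ∧ M.lt g e ∧ ∀ f, M.loc f = p → M.lt f e → M.le f g
  | .top => False

/-- `π ≼_e π'`, i.e. `last_π(e) ≤ last_{π'}(e)` -/
def ple (M : MSC P A E) (π π' : PathExpr P A) (e : E) : Prop :=
  ∃ x y, IsLast M π e x ∧ IsLast M π' e y ∧ M.extLe x y

def gossipSuffix : P → List P → PathExpr P A
  | _, [] => []
  | p, q :: w => PathLetter.msg p q :: PathLetter.nextStar :: gossipSuffix q w

/-- `π_w` for `w = p :: rest` -/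
def gossipExpr (p : P) (w : List P) : PathExpr P A :=
  match w with
  | [] => [PathLetter.next, PathLetter.nextStar]
  | _ :: _ => PathLetter.nextStar :: gossipSuffix p w

/-- `π ∈ Π^gossip` -/
def IsGossip (π : PathExpr P A) : Prop :=
  ∃ (p : P) (w : List P), (p :: w).Nodup ∧ π = gossipExpr p w

/-- actions of a CFM transition -/
inductive CAct (P A Msg : Type) : Type where
  | internal (a : A) : CAct P A Msg
  | send (a : A) (m : Msg) (q : P) : CAct P A Msg
  | recv (a : A) (m : Msg) (q : P) : CAct P A Msg

def CAct.labelOf {P A Msg : Type} : CAct P A Msg → A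
  | .internal a => a
  | .send a _ _ => a
  | .recv a _ _ => a

/-- a communicating finite-state machine over `P` and `A` -/
structure CFM (P A : Type) : Type 1 where
  Msg : Type
  msgFin : Fintype Msg
  S : Type
  sFin : Fintype S
  ι : P → S
  Δ : P → Set (S × CAct P A Msg × S)
  Acc : Set (P → S)
  wf_send : ∀ p s a m q s', (s, CAct.send a m q, s') ∈ Δ p → q ≠ p
  wf_recv : ∀ p s a m q s', (s, CAct.recv a m q, s') ∈ Δ p → q ≠ p

namespace CFM

variable {P A E : Type}

/-- `ρ` is a run of the CFM `C` on the MSC `M` -/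
def IsRun (C : CFM P A) (M : MSC P A E) (ρ : E → C.S × CAct P A C.Msg × C.S) : Prop :=
  (∀ e, ρ e ∈ C.Δ (M.loc e)) ∧
  (∀ e, ((ρ e).2.1).labelOf = M.lab e) ∧
  (∀ e, (¬ ∃ f, M.next f e) → (ρ e).1 = C.ι (M.loc e)) ∧
  (∀ e f, M.next e f → (ρ e).2.2 = (ρ f).1) ∧
  (∀ e, (¬ ∃ f, M.msg e f) → (¬ ∃ f, M.msg f e) → ∃ a, (ρ e).2.1 = CAct.internal a) ∧
  (∀ e f, M.msg e f → ∃ m, (ρ e).2.1 = CAct.send (M.lab e) m (M.loc f) ∧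
      (ρ f).2.1 = CAct.recv (M.lab f) m (M.loc e))

/-- the run `ρ` is accepting -/
def IsAccepting (C : CFM P A) (M : MSC P A E)
    (ρ : E → C.S × CAct P A C.Msg × C.S) : Prop :=
  ∃ s : P → C.S, s ∈ C.Acc ∧ ∀ p,
    ((∃ e, M.loc e = p) → ∃ e, M.loc e = p ∧ (¬ ∃ f, M.next e f) ∧ s p = (ρ e).2.2) ∧
    ((¬ ∃ e, M.loc e = p) → s p = C.ι p)

/-- `M ∈ L(C)` -/
def Accepts (C : CFM P A) (M : MSC P A E) : Prop :=
  ∃ ρ, C.IsRun M ρ ∧ C.IsAccepting M ρ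

/-- deterministic CFMs -/
def Deterministic (C : CFM P A) : Prop :=
  ∀ p s γ₁ s₁ γ₂ s₂, (s, γ₁, s₁) ∈ C.Δ p → (s, γ₂, s₂) ∈ C.Δ p →
    CAct.labelOf γ₁ = CAct.labelOf γ₂ →
    ((∀ a₁ a₂, γ₁ = CAct.internal a₁ → γ₂ = CAct.internal a₂ → s₁ = s₂) ∧
     (∀ a₁ m₁ a₂ m₂ q, γ₁ = CAct.send a₁ m₁ q → γ₂ = CAct.send a₂ m₂ q →
        s₁ = s₂ ∧ m₁ = m₂) ∧
     (∀ a₁ a₂ m q, γ₁ = CAct.recv a₁ m q → γ₂ = CAct.recv a₂ m q → s₁ = s₂))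

end CFM

/-- acceptance of the extended MSC `(M, ξ)` by a CFM over a product alphabet -/
def AcceptsExt {P A E Ξ : Type} (C : CFM P (A × Ξ)) (M : MSC P A E) (ξ : E → Ξ) : Prop :=
  C.Accepts (M.relabel fun e => (M.lab e, ξ e))

/-- apply `μ` to an extended event, sending both `⊥` and `⊤` to `none` -/
def extToOptMap {E Θ : Type} (μ : E → Θ) : ExtEv E → Option Θ
  | .evt g => some (μ g)
  | _ => none

/-- apply `μ` to an extended event, preserving `⊥` and `⊤` -/
def extMap {E Θ : Type} (μ : E → Θ) : ExtEv E → ExtEv Θ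
  | .bot => ExtEv.bot
  | .evt g => ExtEv.evt (μ g)
  | .top => ExtEv.top

/-- formulas of the temporal logic TL -/
inductive TL (P A : Type) : Type where
  | lab (a : A) : TL P A
  | proc (p : P) : TL P A
  | disj (φ ψ : TL P A) : TL P A
  | neg (φ : TL P A) : TL P A
  | co (φ : TL P A) : TL P A
  | tuntil (φ ψ : TL P A) : TL P A
  | tsince (φ ψ : TL P A) : TL P A

/-- `M, e ⊨ φ` -/
def TLsat (M : MSC P A E) : TL P A → E → Prop
  | .lab a, e => M.lab e = a
  | .proc p, e => M.loc e = p
  | .disj φ ψ, e => TLsat M φ e ∨ TLsat M ψ e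
  | .neg φ, e => ¬ TLsat M φ e
  | .co φ, e => ∃ f, ¬ M.le e f ∧ ¬ M.le f e ∧ TLsat M φ f
  | .tuntil φ ψ, e => ∃ f, M.lt e f ∧ TLsat M ψ f ∧ ∀ g, M.lt e g → M.lt g f → TLsat M φ g
  | .tsince φ ψ, e => ∃ f, M.lt f e ∧ TLsat M ψ f ∧ ∀ g, M.lt f g → M.lt g e → TLsat M φ g

end Gossip

/-!
Induct on `π` from the right. If the last letter is `→*`, the last `π`-predecessor of `e` is
also a `π`-predecessor of `f`, since `e →* f`. For any other last letter `l`, the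
`l`-predecessors `m` of `e` and `m'` of `f` through which the last `π l`-predecessors are reached
again satisfy `m →* m'` (for messages this is FIFO), and those last predecessors are the last
`π`-predecessors of `m` and `m'`, so the induction hypothesis applies.
-/

namespace Gossip

variable {P A E : Type}

namespace MSC

variable (M : MSC P A E)

lemma loc_eq_of_nextStar {e f : E} (h : M.nextStar e f) : M.loc e = M.loc f := by
  induction h with
  | refl => rfl
  | tail _ hn ih => exact ih.trans (M.next_loc hn)

lemma le_of_nextStar {e f : E} (h : M.nextStar e f) : M.le e f :=
  Relation.ReflTransGen.mono (fun _ _ hn => Or.inl hn) e f h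

lemma nextStar_of_next_of_next {m m' e f : E} (hm : M.next m e) (hm' : M.next m' f)
    (hef : M.nextStar e f) : M.nextStar m m' := by
  rcases hef.cases_tail with rfl | ⟨c, hec, hcf⟩
  · obtain rfl := M.next_left_unique hm hm'
    exact .refl
  · rw [← M.next_left_unique hcf hm']
    exact hec.head hm

end MSC

variable {M : MSC P A E}

lemma nextStar_of_letterSem {l : PathLetter P A} (hl : l ≠ .nextStar) {m m' e f : E}
    (hm : letterSem M l m e) (hm' : letterSem M l m' f) (hef : M.nextStar e f) :
    M.nextStar m m' := by
  cases l with
  | next => exact M.nextStar_of_next_of_next hm hm' hef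
  | nextStar => exact absurd rfl hl
  | msg p q =>
    obtain ⟨hmp, -, hme⟩ := hm
    obtain ⟨hmp', -, hme'⟩ := hm'
    exact (M.fifo hme hme' (hmp.trans hmp'.symm) (M.loc_eq_of_nextStar hef)).mpr hef
  | lab a =>
    obtain ⟨rfl, -⟩ := hm
    obtain ⟨rfl, -⟩ := hm'
    exact hef

lemma pathSem_append (π π' : PathExpr P A) (g e : E) :
    pathSem M (π ++ π') g e ↔ ∃ m, pathSem M π g m ∧ pathSem M π' m e := by
  induction π generalizing g with
  | nil => simp [pathSem]
  | cons l π ih =>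
    simp only [List.cons_append, pathSem, ih]
    exact ⟨fun ⟨f, hl, m, hπ, hπ'⟩ => ⟨m, ⟨f, hl, hπ⟩, hπ'⟩,
      fun ⟨m, ⟨f, hl, hπ⟩, hπ'⟩ => ⟨f, hl, m, hπ, hπ'⟩⟩

lemma pathSem_singleton (l : PathLetter P A) (m e : E) :
    pathSem M [l] m e ↔ letterSem M l m e := by
  simp [pathSem]

lemma IsLast.exists_isLast_of_append {π π' : PathExpr P A} {e g : E}
    (hg : IsLast M (π ++ π') e (.evt g)) :
    ∃ m, pathSem M π' m e ∧ IsLast M π m (.evt g) := by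
  obtain ⟨hge, hmax⟩ := hg
  obtain ⟨m, hgm, hme⟩ := (pathSem_append π π' g e).1 hge
  exact ⟨m, hme, hgm, fun g' hg' => hmax g' ((pathSem_append π π' g' e).2 ⟨m, hg', hme⟩)⟩

lemma le_of_isLast_of_nextStar (π : PathExpr P A) {e f g h : E} (hef : M.nextStar e f)
    (hg : IsLast M π e (.evt g)) (hh : IsLast M π f (.evt h)) : M.le g h := by
  induction π using List.reverseRecOn generalizing e f g h with
  | nil =>
    obtain ⟨rfl : g = e, -⟩ := hg
    obtain ⟨rfl : h = f, -⟩ := hh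
    exact M.le_of_nextStar hef
  | append_singleton π l ih =>
    obtain ⟨m, hme, hg'⟩ := hg.exists_isLast_of_append
    obtain ⟨m', hm'f, hh'⟩ := hh.exists_isLast_of_append
    rw [pathSem_singleton] at hme hm'f
    by_cases hl : l = .nextStar
    · subst hl
      refine hh.2 g ((pathSem_append π _ g f).2 ⟨m, hg'.1, ?_⟩)
      exact (pathSem_singleton _ m f).2 (Relation.ReflTransGen.trans hme hef)
    · exact ih (nextStar_of_letterSem hl hme hm'f hef) hg' hh'

end Gossip

open Gossip in
theorem stmt0_general {P A E : Type} (M : MSC P A E)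
    (π : PathExpr P A) (e f : E)
    (hef : Relation.ReflTransGen M.next e f)
    (x y : ExtEv E) (hx : IsLast M π e x) (hy : IsLast M π f y)
    (hxb : x ≠ ExtEv.bot) (hyb : y ≠ ExtEv.bot) :
    M.extLe x y := by
  cases x with
  | bot => exact absurd rfl hxb
  | top => exact hx.elim
  | evt g =>
    cases y with
    | bot => exact absurd rfl hyb
    | top => exact hy.elim
    | evt h => exact le_of_isLast_of_nextStar π hef hx hy

open Gossip in
/-- Lemma 1.1: monotonicity of `last_π`:
if `e →* f` and `last_π(e) ≠ ⊥ ≠ last_π(f)`, then `last_π(e) ≤ last_π(f)`. -/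
theorem stmt0 {P A E : Type} [Fintype P] [Fintype A] (M : MSC P A E)
    (π : PathExpr P A) (e f : E)
    (hef : Relation.ReflTransGen M.next e f)
    (x y : ExtEv E) (hx : IsLast M π e x) (hy : IsLast M π f y)
    (hxb : x ≠ ExtEv.bot) (hyb : y ≠ ExtEv.bot) :
    M.extLe x y :=
  stmt0_general M π e f hef x y hx hy hxb hyb
end

section
/- Let M = (E, →, ◁, loc, λ) be an MSC over P and Σ, let π be a path expression, and let e, f ∈ E with e →* f. If first_π(e) ≠ ⊤ and first_π(f) ≠ ⊤, then first_π(e) ≤ first_π(f). -/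
/-
Every letter of a path expression is monotone along `→*`: following it from `e` and from a
later event `f` on the same process gives targets that are again `→*`-ordered, except for the
letter `→*` itself, where `e` can then jump straight to `f`'s target. Shadowing a `π`-path out
of `f` letter by letter therefore yields a `π`-path out of `e` ending causally below it, and
minimality of `first_π(e)` finishes the proof.
-/

namespace Gossip

variable {P A E : Type}

theorem MSC.nextStar_loc (M : MSC P A E) {e f : E} (h : M.nextStar e f) :
    M.loc e = M.loc f := by
  induction h with
  | refl => rfl
  | tail _ hstep ih => exact ih.trans (M.next_loc hstep)

theorem MSC.nextStar_le (M : MSC P A E) {e f : E} (h : M.nextStar e f) : M.le e f :=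
  Relation.ReflTransGen.mono (fun _ _ h => Or.inl h) _ _ h

theorem letterSem_nextStar_or (M : MSC P A E) (l : PathLetter P A) {e f e' f' : E}
    (hef : M.nextStar e f) (he : letterSem M l e e') (hf : letterSem M l f f') :
    M.nextStar e' f' ∨ letterSem M l e f' := by
  cases l with
  | next =>
    left
    rcases Relation.ReflTransGen.cases_head hef with rfl | ⟨c, hec, hcf⟩
    · exact M.next_right_unique he hf ▸ Relation.ReflTransGen.refl
    · exact (M.next_right_unique hec he ▸ hcf).tail hf
  | nextStar =>
    have hloc : M.loc e' = M.loc f' :=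
      (M.nextStar_loc he).symm.trans ((M.nextStar_loc hef).trans (M.nextStar_loc hf))
    exact (M.next_total e' f' hloc).imp_right fun _ => hef.trans hf
  | msg p q =>
    obtain ⟨hep, he'q, hmsg⟩ := he
    obtain ⟨hfp, hf'q, hmsg'⟩ := hf
    exact Or.inl ((M.fifo hmsg hmsg' (hep.trans hfp.symm) (he'q.trans hf'q.symm)).mp hef)
  | lab a =>
    obtain ⟨rfl, -⟩ := he
    obtain ⟨rfl, -⟩ := hf
    exact Or.inl hef

theorem exists_pathSem_le_of_nextStar (M : MSC P A E) (π : PathExpr P A) {e f g h : E}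
    (hef : M.nextStar e f) (hg : pathSem M π e g) (hh : pathSem M π f h) :
    ∃ k, pathSem M π e k ∧ M.le k h := by
  induction π generalizing e f with
  | nil =>
    obtain rfl : f = h := hh
    exact ⟨e, rfl, M.nextStar_le hef⟩
  | cons l π ih =>
    obtain ⟨e', he, hg⟩ := hg
    obtain ⟨f', hf, hh⟩ := hh
    rcases letterSem_nextStar_or M l hef he hf with he'f' | hef'
    · obtain ⟨k, hk, hkh⟩ := ih he'f' hg hh
      exact ⟨k, ⟨e', he, hk⟩, hkh⟩
    · exact ⟨h, ⟨f', hef', hh⟩, Relation.ReflTransGen.refl⟩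

end Gossip
open Gossip in
theorem stmt1_general {P A E : Type} (M : MSC P A E)
    (π : PathExpr P A) (e f : E)
    (hef : Relation.ReflTransGen M.next e f)
    (x y : ExtEv E) (hx : IsFirst M π e x) (hy : IsFirst M π f y)
    (hxt : x ≠ ExtEv.top) :
    M.extLe x y := by
  cases x with
  | bot => exact hx.elim
  | top => exact absurd rfl hxt
  | evt g =>
    cases y with
    | bot => exact hy.elim
    | top => trivial
    | evt h =>
      obtain ⟨k, hk, hkh⟩ := exists_pathSem_le_of_nextStar M π hef hx.1 hy.1
      exact (hx.2 k hk).trans hkh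

open Gossip in
/-- Lemma 1.2: monotonicity of `first_π`:
if `e →* f` and `first_π(e) ≠ ⊤ ≠ first_π(f)`, then `first_π(e) ≤ first_π(f)`. -/
theorem stmt1 {P A E : Type} [Fintype P] [Fintype A] (M : MSC P A E)
    (π : PathExpr P A) (e f : E)
    (hef : Relation.ReflTransGen M.next e f)
    (x y : ExtEv E) (hx : IsFirst M π e x) (hy : IsFirst M π f y)
    (hxt : x ≠ ExtEv.top) (hyt : y ≠ ExtEv.top) :
    M.extLe x y :=
  stmt1_general M π e f hef x y hx hy hxt
end

section
/- Let M be an MSC over P and Σ, let p, q ∈ P, let π, π' ∈ Π_{p,q}, and let e, f ∈ E_q with e → f and π'→* ≺_e π→* (where π→* denotes π followed by the letter →*). Then π ≼_f π' if and only if last_π(f) = ⊥ or f_{π, →*π'}(f) = f, where →*π' denotes the letter →* followed by π'. -/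
namespace Gossip

variable {P A E : Type}

namespace MSC

variable (M : MSC P A E)

lemma nextStar_le_s7 {a b : E} (h : M.nextStar a b) : M.le a b :=
  Relation.ReflTransGen.mono (fun _ _ h => Or.inl h) _ _ h

lemma nextStar_loc_s7 {a b : E} (h : M.nextStar a b) : M.loc a = M.loc b := by
  induction h with
  | refl => rfl
  | tail _ h ih => exact ih.trans (M.next_loc h)

lemma nextStar_of_le {a b : E} (h : M.le a b) (hl : M.loc a = M.loc b) : M.nextStar a b := by
  rcases M.next_total a b hl with h' | h'
  · exact h'
  · obtain rfl := M.causal_antisymm h (M.nextStar_le_s7 h')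
    exact Relation.ReflTransGen.refl

lemma nextStar_of_next_of_next_s7 {a b a' b' : E} (ha : M.next a b) (ha' : M.next a' b')
    (h : M.nextStar b b') : M.nextStar a a' := by
  rcases Relation.ReflTransGen.cases_tail h with rfl | ⟨c, hbc, hcb'⟩
  · obtain rfl := M.next_left_unique ha ha'
    exact Relation.ReflTransGen.refl
  · obtain rfl := M.next_left_unique hcb' ha'
    exact Relation.ReflTransGen.head ha hbc

lemma eq_or_nextStar_of_nextStar_of_next {a b c : E} (hac : M.nextStar a c)
    (hbc : M.next b c) : a = c ∨ M.nextStar a b := by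
  rcases Relation.ReflTransGen.cases_tail hac with rfl | ⟨d, had, hdc⟩
  · exact Or.inl rfl
  · exact Or.inr (M.next_left_unique hdc hbc ▸ had)

lemma extLe_trans {x y z : ExtEv E} (hxy : M.extLe x y) (hyz : M.extLe y z) : M.extLe x z := by
  rcases x with _ | a | _ <;> rcases y with _ | b | _ <;> rcases z with _ | c | _ <;>
    first | trivial | exact hxy.elim | exact hyz.elim | exact Relation.ReflTransGen.trans hxy hyz

lemma extLe_antisymm {x y : ExtEv E} (hxy : M.extLe x y) (hyx : M.extLe y x) : x = y := by
  rcases x with _ | a | _ <;> rcases y with _ | b | _ <;>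
    first | rfl | exact hxy.elim | exact hyx.elim | exact congrArg _ (M.causal_antisymm hxy hyx)

end MSC

lemma letterComp_right_unique {l : PathLetter P A} {r s s' : P}
    (h : letterComp l r s) (h' : letterComp l r s') : s = s' := by
  cases l with
  | msg => exact h.2.trans h'.2.symm
  | _ => exact h.symm.trans h'

lemma letterComp_left_unique {l : PathLetter P A} {r r' s : P}
    (h : letterComp l r s) (h' : letterComp l r' s) : r = r' := by
  cases l with
  | msg => exact h.1.trans h'.1.symm
  | _ => exact h.trans h'.symm

lemma pcomp_right_unique {π : PathExpr P A} {r s s' : P}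
    (h : pcomp π r s) (h' : pcomp π r s') : s = s' := by
  induction π generalizing r with
  | nil => exact h.symm.trans h'
  | cons l π ih =>
    obtain ⟨y, hy, h⟩ := h
    obtain ⟨y', hy', h'⟩ := h'
    obtain rfl := letterComp_right_unique hy hy'
    exact ih h h'

lemma pcomp_left_unique {π : PathExpr P A} {r r' s : P}
    (h : pcomp π r s) (h' : pcomp π r' s) : r = r' := by
  induction π generalizing r r' with
  | nil => exact h.trans h'.symm
  | cons l π ih =>
    obtain ⟨y, hy, h⟩ := h
    obtain ⟨y', hy', h'⟩ := h'
    obtain rfl := ih h h'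
    exact letterComp_left_unique hy hy'

lemma pcomp_loc_of_pathSem (M : MSC P A E) {π : PathExpr P A} {a b : E}
    (h : pathSem M π a b) : pcomp π (M.loc a) (M.loc b) := by
  induction π generalizing a with
  | nil => exact congrArg M.loc h
  | cons l π ih =>
    obtain ⟨c, hl, h⟩ := h
    refine ⟨M.loc c, ?_, ih h⟩
    cases l with
    | next => exact M.next_loc hl
    | nextStar => exact M.nextStar_loc_s7 hl
    | msg => exact ⟨hl.1, hl.2.1⟩
    | lab => exact congrArg M.loc hl.1

lemma pathSem_append_s7 (M : MSC P A E) {σ τ : PathExpr P A} {a c : E} :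
    pathSem M (σ ++ τ) a c ↔ ∃ b, pathSem M σ a b ∧ pathSem M τ b c := by
  induction σ generalizing a with
  | nil => exact ⟨fun h => ⟨a, rfl, h⟩, fun ⟨_, hab, h⟩ => hab ▸ h⟩
  | cons l σ ih =>
    simp only [List.cons_append, pathSem, ih]
    exact ⟨fun ⟨d, hl, b, h, h'⟩ => ⟨b, ⟨d, hl, h⟩, h'⟩,
      fun ⟨b, ⟨d, hl, h⟩, h'⟩ => ⟨d, hl, b, h, h'⟩⟩

lemma pathSem_lift (M : MSC P A E) {π : PathExpr P A} {a b a' b' : E}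
    (h : pathSem M π a b) (h' : pathSem M π a' b') (hb : M.nextStar b b') :
    ∃ c, M.nextStar a c ∧ (c = a ∨ c = a') ∧ pathSem M π c b' := by
  induction π generalizing a b a' b' with
  | nil =>
    obtain rfl := h
    obtain rfl := h'
    exact ⟨a', hb, Or.inr rfl, rfl⟩
  | cons l π ih =>
    obtain ⟨d, hl, h⟩ := h
    obtain ⟨d', hl', h'⟩ := h'
    obtain ⟨c, hdc, hc, hcb'⟩ := ih h h' hb
    cases l with
    | nextStar => exact ⟨a, .refl, Or.inl rfl, c, hl.trans hdc, hcb'⟩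
    | next =>
      rcases hc with rfl | rfl
      · exact ⟨a, .refl, Or.inl rfl, c, hl, hcb'⟩
      · exact ⟨a', M.nextStar_of_next_of_next_s7 hl hl' hdc, Or.inr rfl, c, hl', hcb'⟩
    | lab =>
      rcases hc with rfl | rfl
      · exact ⟨a, .refl, Or.inl rfl, c, hl, hcb'⟩
      · exact ⟨a', hl.1 ▸ hl'.1 ▸ hdc, Or.inr rfl, c, hl', hcb'⟩
    | msg =>
      rcases hc with rfl | rfl
      · exact ⟨a, .refl, Or.inl rfl, c, hl, hcb'⟩
      · refine ⟨a', ?_, Or.inr rfl, c, hl', hcb'⟩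
        exact (M.fifo hl.2.2 hl'.2.2 (hl.1.trans hl'.1.symm) (hl.2.1.trans hl'.2.1.symm)).mpr hdc

namespace IsLast

variable {M : MSC P A E} {π : PathExpr P A} {e : E}

lemma unique {x y : ExtEv E} (hx : IsLast M π e x) (hy : IsLast M π e y) : x = y := by
  rcases x with _ | a | _ <;> rcases y with _ | b | _
  · rfl
  · exact (hx b hy.1).elim
  · exact hy.elim
  · exact (hy a hx.1).elim
  · exact congrArg _ (M.causal_antisymm (hy.2 a hx.1) (hx.2 b hy.1))
  all_goals first | exact hx.elim | exact hy.elim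

lemma extLe_of_pathSem {x : ExtEv E} (hx : IsLast M π e x) {a : E} (ha : pathSem M π a e) :
    M.extLe (.evt a) x := by
  rcases x with _ | b | _
  · exact hx a ha
  · exact hx.2 a ha
  · trivial

lemma extLe_of_pathSem_nextStar_cons {x : ExtEv E} (hx : IsLast M π e x) {a : E}
    (ha : pathSem M (.nextStar :: π) a e) : M.extLe (.evt a) x := by
  obtain ⟨b, hab, hb⟩ := ha
  exact M.extLe_trans (y := .evt b) (M.nextStar_le_s7 hab) (hx.extLe_of_pathSem hb)

lemma extLe_of_append_nextStar {v : ExtEv E} (hv : IsLast M (π ++ [.nextStar]) e v)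
    {f g : E} (hg : IsLast M π f (.evt g)) (hef : M.nextStar e f) : M.extLe v (.evt g) := by
  rcases v with _ | a | _
  · trivial
  · obtain ⟨b, hab, c, hbc, rfl⟩ := (pathSem_append_s7 M).mp hv.1
    obtain ⟨d, had, -, hdf⟩ := pathSem_lift M hab hg.1 (hbc.trans hef)
    exact (M.nextStar_le_s7 had).trans (hg.2 d hdf)
  · exact hv.elim

lemma extLe_of_pathSem_nextStar_cons_append {π' : PathExpr P A} {u v : ExtEv E}
    (hv : IsLast M (π ++ [.nextStar]) e v) (hu : IsLast M (π' ++ [.nextStar]) e u)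
    {f g : E} (hg : IsLast M π f (.evt g)) (hef : M.nextStar e f)
    (hge : pathSem M (.nextStar :: π' ++ [.nextStar]) g e) : M.extLe v u :=
  M.extLe_trans (hv.extLe_of_append_nextStar hg hef) (hu.extLe_of_pathSem_nextStar_cons hge)

end IsLast

lemma IsFa.isFirst {M : MSC P A E} {π σ : PathExpr P A} {e g : E} {z : ExtEv E}
    (hz : IsFa M π σ e z) (hg : IsLast M π e (.evt g)) : IsFirst M σ g z := by
  rcases hz with ⟨hb, -⟩ | ⟨g', hg', hz⟩
  · cases hb.unique hg
  · cases hg'.unique hg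
    exact hz

end Gossip
open Gossip in
theorem stmt7_general {P A E : Type} (M : MSC P A E)
    (p q : P) (π π' : PathExpr P A)
    (hπ : pcomp π p q) (hπ' : pcomp π' p q)
    (e f : E) (hf : M.loc f = q) (hef : M.next e f)
    (u v : ExtEv E)
    (hu : IsLast M (π' ++ [PathLetter.nextStar]) e u)
    (hv : IsLast M (π ++ [PathLetter.nextStar]) e v)
    (huv : M.extLt u v)
    (x x' z : ExtEv E)
    (hx : IsLast M π f x) (hx' : IsLast M π' f x')
    (hz : IsFa M π (PathLetter.nextStar :: π') f z) :
    M.extLe x x' ↔ (x = ExtEv.bot ∨ z = ExtEv.evt f) := by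
  cases x with
  | bot => exact iff_of_true trivial (Or.inl rfl)
  | top => exact hx.elim
  | evt g =>
  have hz := hz.isFirst hx
  refine ⟨fun hgx' => Or.inr ?_, ?_⟩
  · cases x' with
    | bot => exact hgx'.elim
    | top => exact hx'.elim
    | evt g' =>
    have hloc : M.loc g = M.loc g' :=
      (pcomp_left_unique (hf ▸ pcomp_loc_of_pathSem M hx.1) hπ).trans
        (pcomp_left_unique (hf ▸ pcomp_loc_of_pathSem M hx'.1) hπ').symm
    have hgf : pathSem M (.nextStar :: π') g f := ⟨g', M.nextStar_of_le hgx' hloc, hx'.1⟩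
    cases z with
    | bot => exact hz.elim
    | top => exact (hz f hgf).elim
    | evt h =>
    have hhf : M.nextStar h f := M.nextStar_of_le (hz.2 f hgf)
      (pcomp_right_unique (pcomp_loc_of_pathSem M hz.1) (pcomp_loc_of_pathSem M hgf))
    rcases M.eq_or_nextStar_of_nextStar_of_next hhf hef with rfl | hhe
    · rfl
    have hge : pathSem M (.nextStar :: π' ++ [.nextStar]) g e :=
      (pathSem_append_s7 M (σ := .nextStar :: π')).mpr ⟨h, hz.1, e, hhe, rfl⟩
    have hvu := hv.extLe_of_pathSem_nextStar_cons_append hu hx (.single hef) hge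
    exact (huv.2 (M.extLe_antisymm huv.1 hvu)).elim
  · rintro (h | rfl)
    · cases h
    · exact hx'.extLe_of_pathSem_nextStar_cons hz.1

open Gossip in
/-- Lemma 3.2: if `e → f` and `π'→* ≺_e π→*`, then
`π ≼_f π'` iff `last_π(f) = ⊥` or `f_{π, →*π'}(f) = f`. -/
theorem stmt7 {P A E : Type} [Fintype P] [Fintype A] (M : MSC P A E)
    (p q : P) (π π' : PathExpr P A)
    (hπ : pcomp π p q) (hπ' : pcomp π' p q)
    (e f : E) (he : M.loc e = q) (hf : M.loc f = q) (hef : M.next e f)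
    (u v : ExtEv E)
    (hu : IsLast M (π' ++ [PathLetter.nextStar]) e u)
    (hv : IsLast M (π ++ [PathLetter.nextStar]) e v)
    (huv : M.extLt u v)
    (x x' z : ExtEv E)
    (hx : IsLast M π f x) (hx' : IsLast M π' f x')
    (hz : IsFa M π (PathLetter.nextStar :: π') f z) :
    M.extLe x x' ↔ (x = ExtEv.bot ∨ z = ExtEv.evt f) :=
  stmt7_general M p q π π' hπ hπ' e f hf hef u v hu hv huv x x' z hx hx' hz
end

section
/- Let α be a finite type and f : α → α a function such that for every x ∈ α and every n ≥ 1, if the n-th iterate f^[n](x) = x then f(x) = x (i.e., the functional graph of f has no cycles other than self-loops). Then there exists a 2-coloring χ : α → Bool such that for every x ∈ α with f(x) ≠ x, χ(x) ≠ χ(f(x)). -/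
/-- if the functional graph of `f : α → α` (`α` finite) has no
cycles other than self-loops, then there is a 2-coloring `χ` with
`χ(x) ≠ χ(f(x))` whenever `f(x) ≠ x`. -/

theorem stmt11 (α : Type) [Fintype α] (f : α → α)
    (h : ∀ (x : α) (n : ℕ), 1 ≤ n → f^[n] x = x → f x = x) :
    ∃ χ : α → Bool, ∀ x, f x ≠ x → χ x ≠ χ (f x) := by
  classical
  have hex : ∀ x : α, ∃ n : ℕ, f (f^[n] x) = f^[n] x := by
    intro x
    obtain ⟨i, j, hij, hval⟩ := Finite.exists_ne_map_eq_of_infinite (fun n : ℕ => f^[n] x)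
    wlog hlt : i < j generalizing i j
    · exact this j i hij.symm hval.symm (by omega)
    refine ⟨i, h (f^[i] x) (j - i) (by omega) ?_⟩
    rw [← Function.iterate_add_apply]
    have heq : j - i + i = j := by omega
    rw [heq, ← hval]
  have key : ∀ x, f x ≠ x → Nat.find (hex (f x)) + 1 = Nat.find (hex x) := by
    intro x hx
    have h1 : Nat.find (hex x) ≤ Nat.find (hex (f x)) + 1 := by
      apply Nat.find_le
      have := Nat.find_spec (hex (f x))
      rw [Function.iterate_succ_apply]
      exact this
    have hpos : 1 ≤ Nat.find (hex x) := by
      by_contra hcon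
      have h0 : Nat.find (hex x) = 0 := by omega
      have := Nat.find_spec (hex x)
      rw [h0] at this
      simp only [Function.iterate_zero, id_eq] at this
      exact hx this
    have h2 : Nat.find (hex (f x)) ≤ Nat.find (hex x) - 1 := by
      apply Nat.find_le
      have := Nat.find_spec (hex x)
      have heq : f^[Nat.find (hex x) - 1] (f x) = f^[Nat.find (hex x)] x := by
        rw [← Function.iterate_succ_apply]
        congr 1
        omega
      rw [heq]
      exact this
    omega
  refine ⟨fun x => decide (Nat.find (hex x) % 2 = 0), fun x hx hc => ?_⟩
  have hk := key x hx
  rw [decide_eq_decide] at hc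
  omega
end
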